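/- arXiv:0811.0031 — 3 statements merged into one kernel-verified Lean document; each statement's English description precedes it below -/
import Mathlib

section
/- If p : ℝ^n → ℝ is a norm (positively homogeneous of degree 1, subadditive, vanishing only at 0) that is smooth away from 0, then there exists a nonzero point ξ ∈ ℝ^n at which the second differential (Hessian) of p² is nondegenerate (i.e., positive definite). -/
/-- The Hessian (second differential) of `f` at `ξ`, as a bilinear form applied to `η, ν`. -/
noncomputable def hess {n : ℕ} (f : (Fin n → ℝ) → ℝ) (ξ η ν : Fin n → ℝ) : ℝ :=
  fderiv ℝ (fderiv ℝ f) ξ η ν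

/-!
Minimise `f = p²` on the unit sphere of a Euclidean structure, at `ξ₀`, with value `m > 0`.
Since `f` is positively homogeneous of degree two, `m ‖ζ‖² ≤ f ζ` for all `ζ`, with equality at
`ξ₀`. So `f - m ‖·‖²` attains its minimum at `ξ₀`, where its Hessian is therefore positive
semidefinite, i.e. the Hessian of `f` at `ξ₀` dominates `2 m ⟪η, η⟫`.
-/

open Filter Topology Set Metric

theorem IsLocalMin.nonneg_of_hasDerivAt_of_hasDerivAt {φ φ' : ℝ → ℝ} {a s : ℝ}
    (hmin : IsLocalMin φ a) (hφ : ∀ᶠ t in 𝓝 a, HasDerivAt φ (φ' t) t)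
    (hφ' : HasDerivAt φ' s a) : 0 ≤ s := by
  by_contra! hs
  have hφ'a : φ' a = 0 := hmin.hasDerivAt_eq_zero hφ.self_of_nhds
  have hneg : ∀ᶠ t in 𝓝[>] a, φ' t < 0 := by
    have := (hasDerivAt_iff_tendsto_slope.mp hφ').mono_left (nhdsGT_le_nhdsNE a)
    filter_upwards [this.eventually_lt_const hs, self_mem_nhdsWithin] with t ht hat
    simpa [hφ'a] using (slope_neg_iff_of_le (le_of_lt hat)).mp ht
  obtain ⟨b, hab, hb⟩ := (nhdsGT_basis a).eventually_iff.mp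
    (hneg.and ((hφ.and hmin).filter_mono nhdsWithin_le_nhds))
  obtain ⟨d, had, hdb⟩ := exists_between hab
  have hIoc : ∀ t ∈ Ioc a d, t ∈ Ioo a b := fun t ht => ⟨ht.1, ht.2.trans_lt hdb⟩
  have hcont : ContinuousOn φ (Icc a d) := by
    intro t ht
    rcases ht.1.eq_or_lt with rfl | hat
    · exact hφ.self_of_nhds.continuousAt.continuousWithinAt
    · exact (hb (hIoc t ⟨hat, ht.2⟩)).2.1.continuousAt.continuousWithinAt
  obtain ⟨c, hc, hφc⟩ := exists_hasDerivAt_eq_slope φ φ' had hcont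
    fun t ht => (hb (hIoc t (Ioo_subset_Ioc_self ht))).2.1
  have hslope : 0 ≤ (φ d - φ a) / (d - a) :=
    div_nonneg (sub_nonneg.2 (hb (hIoc d ⟨had, le_rfl⟩)).2.2) (sub_nonneg.2 had.le)
  linarith [(hb (hIoc c (Ioo_subset_Ioc_self hc))).1]

section NormedSpace

variable {E : Type*} [NormedAddCommGroup E] [NormedSpace ℝ E]

theorem IsLocalMin.fderiv_fderiv_apply_self_nonneg {f : E → ℝ} {x : E} (hmin : IsLocalMin f x)
    (hf : ContDiffAt ℝ 2 f x) (v : E) : 0 ≤ fderiv ℝ (fderiv ℝ f) x v v := by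
  have hline : ∀ t : ℝ, HasDerivAt (fun t : ℝ => x + t • v) v t := fun t => by
    simpa using ((hasDerivAt_id t).smul_const v).const_add x
  have hx0 : x + (0 : ℝ) • v = x := by simp
  have hC2 : ∀ᶠ t in 𝓝 (0 : ℝ), ContDiffAt ℝ 2 f (x + t • v) := by
    have htendsto := (hline 0).continuousAt.tendsto
    rw [hx0] at htendsto
    exact htendsto.eventually (hf.eventually (by norm_num))
  refine IsLocalMin.nonneg_of_hasDerivAt_of_hasDerivAt (a := 0) (φ := fun t => f (x + t • v))
    (φ' := fun t => fderiv ℝ f (x + t • v) v) ?_ ?_ ?_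
  · rw [← hx0] at hmin
    exact hmin.comp_continuous (b := (0 : ℝ)) (hline 0).continuousAt
  · filter_upwards [hC2] with t ht
    exact (ht.differentiableAt (by norm_num)).hasFDerivAt.comp_hasDerivAt t (hline t)
  · have hdiff : DifferentiableAt ℝ (fderiv ℝ f) x :=
      (hf.fderiv_right (m := 1) le_rfl).differentiableAt one_ne_zero
    rw [← hx0] at hdiff
    have hderiv := hdiff.hasFDerivAt.comp_hasDerivAt 0 (hline 0)
    simpa using hderiv.clm_apply (hasDerivAt_const 0 v)

theorem ContDiffAt.fderiv_fderiv_sub_apply {f g : E → ℝ} {x : E} (hf : ContDiffAt ℝ 2 f x)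
    (hg : ContDiffAt ℝ 2 g x) (u v : E) :
    fderiv ℝ (fderiv ℝ fun y => f y - g y) x u v =
      fderiv ℝ (fderiv ℝ f) x u v - fderiv ℝ (fderiv ℝ g) x u v := by
  have hsub : fderiv ℝ (fun y => f y - g y) =ᶠ[𝓝 x] fun y => fderiv ℝ f y - fderiv ℝ g y := by
    filter_upwards [hf.eventually (by norm_num), hg.eventually (by norm_num)] with y hfy hgy
    exact fderiv_sub (hfy.differentiableAt (by norm_num)) (hgy.differentiableAt (by norm_num))
  rw [hsub.fderiv_eq,
    fderiv_fun_sub ((hf.fderiv_right (m := 1) le_rfl).differentiableAt one_ne_zero)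
      ((hg.fderiv_right (m := 1) le_rfl).differentiableAt one_ne_zero)]
  rfl

theorem fderiv_fderiv_comp_continuousLinearEquiv {F : Type*} [NormedAddCommGroup F]
    [NormedSpace ℝ F] (e : E ≃L[ℝ] F) (f : F → ℝ) (x u v : E) :
    fderiv ℝ (fderiv ℝ (f ∘ e)) x u v = fderiv ℝ (fderiv ℝ f) (e x) (e u) (e v) := by
  have hfderiv : fderiv ℝ (f ∘ e) =
      e.symm.arrowCongr (ContinuousLinearEquiv.refl ℝ ℝ) ∘ fderiv ℝ f ∘ e := by
    ext y w
    simp [e.comp_right_fderiv]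
  rw [hfderiv, ContinuousLinearEquiv.comp_fderiv, e.comp_right_fderiv]
  simp

theorem mul_norm_sq_le_of_isMinOn_sphere {f : E → ℝ}
    (hhomog : ∀ c : ℝ, 0 ≤ c → ∀ ξ, f (c • ξ) = c ^ 2 * f ξ) {ξ₀ : E}
    (hmin : IsMinOn f (sphere 0 1) ξ₀) (ζ : E) : f ξ₀ * ‖ζ‖ ^ 2 ≤ f ζ := by
  rcases eq_or_ne ζ 0 with rfl | hζ
  · simpa using (hhomog 0 le_rfl 0).ge
  have hnorm : 0 < ‖ζ‖ := norm_pos_iff.mpr hζ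
  have hunit : ‖ζ‖⁻¹ • ζ ∈ sphere (0 : E) 1 := by simp [norm_smul, hnorm.ne']
  calc f ξ₀ * ‖ζ‖ ^ 2 ≤ ‖ζ‖ ^ 2 * f (‖ζ‖⁻¹ • ζ) := by
        rw [mul_comm]; exact mul_le_mul_of_nonneg_left (hmin hunit) (by positivity)
    _ = f ζ := by rw [← hhomog _ (norm_nonneg ζ), smul_inv_smul₀ hnorm.ne']

end NormedSpace

section InnerProductSpace

variable {E : Type*} [NormedAddCommGroup E] [InnerProductSpace ℝ E]

theorem fderiv_fderiv_const_mul_norm_sq_apply (c : ℝ) (x u v : E) :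
    fderiv ℝ (fderiv ℝ fun y : E => c * ‖y‖ ^ 2) x u v = c * (2 * inner ℝ u v) := by
  have hfderiv : fderiv ℝ (fun y : E => c * ‖y‖ ^ 2) = ⇑(c • 2 • innerSL ℝ (E := E)) := by
    ext1 y
    rw [fderiv_const_mul ((contDiff_norm_sq ℝ (n := 1)).differentiable one_ne_zero y),
      fderiv_norm_sq]
    rfl
  rw [hfderiv, ContinuousLinearMap.fderiv]
  change c * ((2 : ℕ) • inner ℝ u v) = _
  rw [nsmul_eq_mul, Nat.cast_ofNat]

theorem exists_ne_zero_fderiv_fderiv_pos_of_innerProductSpace [FiniteDimensional ℝ E]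
    [Nontrivial E] (f : E → ℝ) (hhomog : ∀ c : ℝ, 0 ≤ c → ∀ ξ, f (c • ξ) = c ^ 2 * f ξ)
    (hpos : ∀ ξ, ξ ≠ 0 → 0 < f ξ) (hf : ContDiffOn ℝ 2 f {ξ | ξ ≠ 0}) :
    ∃ ξ : E, ξ ≠ 0 ∧ ∀ η : E, η ≠ 0 → 0 < fderiv ℝ (fderiv ℝ f) ξ η η := by
  have hsphere : sphere (0 : E) 1 ⊆ {ξ | ξ ≠ 0} := fun ξ hξ => ne_zero_of_mem_unit_sphere ⟨ξ, hξ⟩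
  obtain ⟨ξ₀, hξ₀, hmin⟩ := (isCompact_sphere (0 : E) 1).exists_isMinOn
    (NormedSpace.sphere_nonempty.mpr zero_le_one) (hf.continuousOn.mono hsphere)
  have hξ₀0 : ξ₀ ≠ 0 := hsphere hξ₀
  refine ⟨ξ₀, hξ₀0, fun η hη => ?_⟩
  have hlocmin : IsLocalMin (fun ζ => f ζ - f ξ₀ * ‖ζ‖ ^ 2) ξ₀ := by
    refine Eventually.of_forall fun ζ => ?_
    have := mul_norm_sq_le_of_isMinOn_sphere hhomog hmin ζ
    simp only [mem_sphere_zero_iff_norm.mp hξ₀]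
    linarith
  have hf₀ : ContDiffAt ℝ 2 f ξ₀ := hf.contDiffAt (isOpen_ne.mem_nhds hξ₀0)
  have hq : ContDiffAt ℝ 2 (fun ζ : E => f ξ₀ * ‖ζ‖ ^ 2) ξ₀ :=
    contDiffAt_const.mul (contDiff_norm_sq ℝ).contDiffAt
  have hsemidef := hlocmin.fderiv_fderiv_apply_self_nonneg (hf₀.sub hq) η
  rw [hf₀.fderiv_fderiv_sub_apply hq, fderiv_fderiv_const_mul_norm_sq_apply,
    real_inner_self_eq_norm_sq] at hsemidef
  have : 0 < f ξ₀ * (2 * ‖η‖ ^ 2) := by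
    have := hpos ξ₀ hξ₀0
    have := norm_pos_iff.mpr hη
    positivity
  linarith

end InnerProductSpace

theorem exists_ne_zero_fderiv_fderiv_pos {E : Type*} [NormedAddCommGroup E] [NormedSpace ℝ E]
    [FiniteDimensional ℝ E] [Nontrivial E] (f : E → ℝ)
    (hhomog : ∀ c : ℝ, 0 ≤ c → ∀ ξ, f (c • ξ) = c ^ 2 * f ξ)
    (hpos : ∀ ξ, ξ ≠ 0 → 0 < f ξ) (hf : ContDiffOn ℝ 2 f {ξ | ξ ≠ 0}) :
    ∃ ξ : E, ξ ≠ 0 ∧ ∀ η : E, η ≠ 0 → 0 < fderiv ℝ (fderiv ℝ f) ξ η η := by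
  set e : E ≃L[ℝ] EuclideanSpace ℝ (Fin (Module.finrank ℝ E)) := toEuclidean
  have := e.symm.toEquiv.nontrivial
  obtain ⟨ξ, hξ, hpd⟩ := exists_ne_zero_fderiv_fderiv_pos_of_innerProductSpace (f ∘ e.symm)
    (fun c hc ξ => by simp [hhomog c hc]) (fun ξ hξ => hpos _ (by simpa using hξ))
    (hf.comp e.symm.contDiff.contDiffOn fun ξ hξ => by simpa using hξ)
  refine ⟨e.symm ξ, by simpa using hξ, fun η hη => ?_⟩
  simpa [fderiv_fderiv_comp_continuousLinearEquiv] using hpd (e η) (by simpa using hη)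

theorem stmt0_general {n : ℕ} (hn : 1 ≤ n) (p : (Fin n → ℝ) → ℝ)
    (hhomog : ∀ c : ℝ, 0 ≤ c → ∀ ξ, p (c • ξ) = c * p ξ)
    (hdef : ∀ ξ, p ξ = 0 → ξ = 0)
    (hsmooth : ContDiffOn ℝ 2 p {ξ | ξ ≠ 0}) :
    ∃ ξ : Fin n → ℝ, ξ ≠ 0 ∧
      ∀ η : Fin n → ℝ, η ≠ 0 → 0 < hess (fun ζ => (p ζ) ^ 2) ξ η η := by
  have : Nonempty (Fin n) := ⟨⟨0, hn⟩⟩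
  exact exists_ne_zero_fderiv_fderiv_pos (fun ζ => p ζ ^ 2)
    (fun c hc ξ => by rw [hhomog c hc, mul_pow])
    (fun ξ hξ => sq_pos_of_ne_zero (mt (hdef ξ) hξ)) (hsmooth.pow 2)

/-- If `p : ℝⁿ → ℝ` is a norm (positively 1-homogeneous, subadditive, vanishing only at `0`)
that is smooth away from `0`, then there is a nonzero point at which the Hessian of `p²`
is positive definite. -/
theorem stmt0 {n : ℕ} (hn : 1 ≤ n) (p : (Fin n → ℝ) → ℝ)
    (hnonneg : ∀ ξ, 0 ≤ p ξ)
    (hhomog : ∀ c : ℝ, 0 ≤ c → ∀ ξ, p (c • ξ) = c * p ξ)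
    (hsub : ∀ ξ η, p (ξ + η) ≤ p ξ + p η)
    (hdef : ∀ ξ, p ξ = 0 → ξ = 0)
    (hsmooth : ContDiffOn ℝ 2 p {ξ | ξ ≠ 0}) :
    ∃ ξ : Fin n → ℝ, ξ ≠ 0 ∧
      ∀ η : Fin n → ℝ, η ≠ 0 → 0 < hess (fun ζ => (p ζ) ^ 2) ξ η η :=
  stmt0_general hn p hhomog hdef hsmooth
end

section
/- Let ∇ be a symmetric affine connection on a connected manifold M of dimension n ≥ 2, and suppose a symmetric (2,0)-tensor a^{ij}, a vector field λ^i, and a constant μ satisfy a^{ij}_{,k} = λ^i δ^j_k + λ^j δ^i_k and λ^i_{,j} = μ δ^i_j. Then the system is of Cauchy–Frobenius (finite) type: a solution (a,λ) is uniquely determined on all of M by its value (a(q), λ(q)) at a single point q ∈ M. In particular, the space of solutions has dimension at most n(n+1)/2 + n. -/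
/-- Covariant derivative `(∇a)^{ij}_{,k} = ∂_k a^{ij} + Γ^i_{km} a^{mj} + Γ^j_{km} a^{im}`
of a `(2,0)`-tensor field, with Christoffel symbols `Γ x i j k = Γ^i_{jk}(x)`. -/
noncomputable def covDeriv20 {n : ℕ} (Γ : (Fin n → ℝ) → Fin n → Fin n → Fin n → ℝ)
    (a : (Fin n → ℝ) → Fin n → Fin n → ℝ) (x : Fin n → ℝ) (k i j : Fin n) : ℝ :=
  fderiv ℝ (fun y => a y i j) x (Pi.single k 1)
    + ∑ m, Γ x i k m * a x m j + ∑ m, Γ x j k m * a x i m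

/-- Covariant derivative `λ^i_{,j} = ∂_j λ^i + Γ^i_{jm} λ^m` of a vector field. -/
noncomputable def covDerivVec {n : ℕ} (Γ : (Fin n → ℝ) → Fin n → Fin n → Fin n → ℝ)
    (lam : (Fin n → ℝ) → Fin n → ℝ) (x : Fin n → ℝ) (j i : Fin n) : ℝ :=
  fderiv ℝ (fun y => lam y i) x (Pi.single j 1) + ∑ m, Γ x i j m * lam x m


open Finset Set

noncomputable def Vmap {n : ℕ} (G : Fin n → Fin n → Fin n → ℝ) (w : Fin n → ℝ)
    (y : (Fin n → Fin n → ℝ) × (Fin n → ℝ)) : (Fin n → Fin n → ℝ) × (Fin n → ℝ) :=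
  (fun i j => (y.2 i * w j + y.2 j * w i)
      - ∑ k, w k * ((∑ m, G i k m * y.1 m j) + (∑ m, G j k m * y.1 i m)),
   fun i => - ∑ k, w k * ∑ m, G i k m * y.2 m)

lemma Vmap_zero {n : ℕ} (G : Fin n → Fin n → Fin n → ℝ) (w : Fin n → ℝ) :
    Vmap G w 0 = 0 := by
  unfold Vmap
  refine Prod.ext ?_ ?_
  · funext i j; simp
  · funext i; simp

lemma Vmap_sub {n : ℕ} (G : Fin n → Fin n → Fin n → ℝ) (w : Fin n → ℝ)
    (y z : (Fin n → Fin n → ℝ) × (Fin n → ℝ)) :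
    Vmap G w y - Vmap G w z = Vmap G w (y - z) := by
  unfold Vmap
  refine Prod.ext ?_ ?_
  · funext i j
    simp only [Prod.fst_sub, Prod.snd_sub, Pi.sub_apply, mul_sub, mul_add, Finset.sum_sub_distrib, Finset.sum_add_distrib]
    ring
  · funext i
    simp only [Prod.fst_sub, Prod.snd_sub, Pi.sub_apply, mul_sub, mul_add, Finset.sum_sub_distrib, Finset.sum_add_distrib]
    ring

lemma Vmap_norm_le {n : ℕ} (G : Fin n → Fin n → Fin n → ℝ) (w : Fin n → ℝ)
    (B : ℝ) (hB : 0 ≤ B) (hG : ∀ i k m, |G i k m| ≤ B)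
    (d : (Fin n → Fin n → ℝ) × (Fin n → ℝ)) :
    ‖Vmap G w d‖ ≤ (2 * ‖w‖ * (1 + (n:ℝ)^2 * B)) * ‖d‖ := by
  have hd1 : ∀ m j, |d.1 m j| ≤ ‖d‖ := fun m j =>
    calc |d.1 m j| = ‖d.1 m j‖ := rfl
      _ ≤ ‖d.1 m‖ := norm_le_pi_norm _ j
      _ ≤ ‖d.1‖ := norm_le_pi_norm _ m
      _ ≤ ‖d‖ := norm_fst_le d
  have hd2 : ∀ i, |d.2 i| ≤ ‖d‖ := fun i =>
    calc |d.2 i| = ‖d.2 i‖ := rfl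
      _ ≤ ‖d.2‖ := norm_le_pi_norm _ i
      _ ≤ ‖d‖ := norm_snd_le d
  have hwk : ∀ k, |w k| ≤ ‖w‖ := fun k => by simpa using norm_le_pi_norm w k
  have hdnn : (0:ℝ) ≤ ‖d‖ := norm_nonneg d
  have hwnn : (0:ℝ) ≤ ‖w‖ := norm_nonneg w
  have hCnn : (0:ℝ) ≤ (2 * ‖w‖ * (1 + (n:ℝ)^2 * B)) * ‖d‖ := by positivity
  have hsum : ∀ (i j : Fin n) (p : Fin n → Fin n → ℝ),
      (∀ m j', |p m j'| ≤ ‖d‖) → ∀ k, |∑ m, G i k m * p m j| ≤ (n:ℝ) * (B * ‖d‖) := by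
    intro i j p hp k
    calc |∑ m, G i k m * p m j| ≤ ∑ m, |G i k m * p m j| := Finset.abs_sum_le_sum_abs _ _
      _ ≤ ∑ _m : Fin n, B * ‖d‖ := by
          refine Finset.sum_le_sum fun m _ => ?_
          rw [abs_mul]
          exact mul_le_mul (hG i k m) (hp m j) (abs_nonneg _) hB
      _ = (n:ℝ) * (B * ‖d‖) := by simp [Finset.sum_const, mul_comm]
  rw [Prod.norm_def]
  apply max_le
  · rw [pi_norm_le_iff_of_nonneg hCnn]
    intro i
    rw [pi_norm_le_iff_of_nonneg hCnn]
    intro j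
    show ‖(Vmap G w d).1 i j‖ ≤ _
    unfold Vmap
    rw [Real.norm_eq_abs]
    have h1 : |d.2 i * w j + d.2 j * w i| ≤ 2 * (‖d‖ * ‖w‖) := by
      calc |d.2 i * w j + d.2 j * w i| ≤ |d.2 i * w j| + |d.2 j * w i| := abs_add_le _ _
        _ = |d.2 i| * |w j| + |d.2 j| * |w i| := by rw [abs_mul, abs_mul]
        _ ≤ ‖d‖ * ‖w‖ + ‖d‖ * ‖w‖ := by
            gcongr <;> [exact hd2 i; exact hwk j; exact hd2 j; exact hwk i]
        _ = 2 * (‖d‖ * ‖w‖) := by ring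
    have h2 : |∑ k, w k * ((∑ m, G i k m * d.1 m j) + (∑ m, G j k m * d.1 i m))|
        ≤ (n:ℝ) * (‖w‖ * (2 * ((n:ℝ) * (B * ‖d‖)))) := by
      calc |∑ k, w k * ((∑ m, G i k m * d.1 m j) + (∑ m, G j k m * d.1 i m))|
          ≤ ∑ k, |w k * ((∑ m, G i k m * d.1 m j) + (∑ m, G j k m * d.1 i m))| :=
            Finset.abs_sum_le_sum_abs _ _
        _ ≤ ∑ _k : Fin n, ‖w‖ * (2 * ((n:ℝ) * (B * ‖d‖))) := by
            refine Finset.sum_le_sum fun k _ => ?_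
            rw [abs_mul]
            refine mul_le_mul (hwk k) ?_ (abs_nonneg _) hwnn
            calc |(∑ m, G i k m * d.1 m j) + (∑ m, G j k m * d.1 i m)|
                ≤ |∑ m, G i k m * d.1 m j| + |∑ m, G j k m * d.1 i m| := abs_add_le _ _
              _ ≤ (n:ℝ) * (B * ‖d‖) + (n:ℝ) * (B * ‖d‖) := by
                  refine add_le_add (hsum i j d.1 hd1 k) ?_
                  have := hsum j i (fun m j' => d.1 j' m) (fun m j' => hd1 j' m) k
                  simpa using this
              _ = 2 * ((n:ℝ) * (B * ‖d‖)) := by ring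
        _ = (n:ℝ) * (‖w‖ * (2 * ((n:ℝ) * (B * ‖d‖)))) := by simp [Finset.sum_const, mul_comm]
    calc |(d.2 i * w j + d.2 j * w i)
          - ∑ k, w k * ((∑ m, G i k m * d.1 m j) + (∑ m, G j k m * d.1 i m))|
        ≤ |d.2 i * w j + d.2 j * w i|
          + |∑ k, w k * ((∑ m, G i k m * d.1 m j) + (∑ m, G j k m * d.1 i m))| := abs_sub _ _
      _ ≤ 2 * (‖d‖ * ‖w‖) + (n:ℝ) * (‖w‖ * (2 * ((n:ℝ) * (B * ‖d‖)))) := add_le_add h1 h2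
      _ ≤ (2 * ‖w‖ * (1 + (n:ℝ)^2 * B)) * ‖d‖ := by nlinarith [sq_nonneg ((n:ℝ))]
  · rw [pi_norm_le_iff_of_nonneg hCnn]
    intro i
    show ‖(Vmap G w d).2 i‖ ≤ _
    unfold Vmap
    rw [Real.norm_eq_abs, abs_neg]
    calc |∑ k, w k * ∑ m, G i k m * d.2 m|
        ≤ ∑ k, |w k * ∑ m, G i k m * d.2 m| := Finset.abs_sum_le_sum_abs _ _
      _ ≤ ∑ _k : Fin n, ‖w‖ * ((n:ℝ) * (B * ‖d‖)) := by
          refine Finset.sum_le_sum fun k _ => ?_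
          rw [abs_mul]
          refine mul_le_mul (hwk k) ?_ (abs_nonneg _) hwnn
          have := hsum i i (fun m _ => d.2 m) (fun m _ => hd2 m) k
          simpa using this
      _ = (n:ℝ) * (‖w‖ * ((n:ℝ) * (B * ‖d‖))) := by simp [Finset.sum_const, mul_comm]
      _ ≤ (2 * ‖w‖ * (1 + (n:ℝ)^2 * B)) * ‖d‖ := by nlinarith [sq_nonneg ((n:ℝ))]

lemma Vmap_lipschitz {n : ℕ} (G : Fin n → Fin n → Fin n → ℝ) (w : Fin n → ℝ)
    (B : ℝ) (hB : 0 ≤ B) (hG : ∀ i k m, |G i k m| ≤ B) :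
    LipschitzWith (2 * ‖w‖ * (1 + (n:ℝ)^2 * B)).toNNReal (Vmap G w) := by
  apply LipschitzWith.of_dist_le_mul
  intro y z
  rw [dist_eq_norm, dist_eq_norm, Real.coe_toNNReal _ (by positivity), Vmap_sub]
  exact Vmap_norm_le G w B hB hG _

open Finset Set

lemma fderiv_apply_eq_sum' {n : ℕ} (g : (Fin n → ℝ) → ℝ) (y w : Fin n → ℝ) :
    fderiv ℝ g y w = ∑ k, w k * fderiv ℝ g y (Pi.single k 1) := by
  conv_lhs => rw [show w = ∑ k, w k • (Pi.single k 1 : Fin n → ℝ) by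
    funext j; simp [Pi.single_apply, Finset.sum_apply]]
  rw [map_sum]; simp

lemma mainAux {n : ℕ} (Γ : (Fin n → ℝ) → Fin n → Fin n → Fin n → ℝ)
    (hΓcont : Continuous Γ)
    (b : (Fin n → ℝ) → Fin n → Fin n → ℝ) (nu : (Fin n → ℝ) → Fin n → ℝ)
    (hbdiff : ∀ i j, Differentiable ℝ fun x => b x i j)
    (hnudiff : ∀ i, Differentiable ℝ fun x => nu x i)
    (hb' : ∀ y i j k, fderiv ℝ (fun z => b z i j) y (Pi.single k 1) =
      nu y i * (if j = k then 1 else 0) + nu y j * (if i = k then 1 else 0)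
        - ∑ m, Γ y i k m * b y m j - ∑ m, Γ y j k m * b y i m)
    (hnu' : ∀ y i k, fderiv ℝ (fun z => nu z i) y (Pi.single k 1) =
      - ∑ m, Γ y i k m * nu y m)
    (q x : Fin n → ℝ) (hbq : b q = 0) (hnuq : nu q = 0) :
    b x = 0 ∧ nu x = 0 := by
  set w : Fin n → ℝ := x - q with hw
  set γ : ℝ → (Fin n → ℝ) := fun t => q + t • w with hγdef
  have hγ : ∀ t, HasDerivAt γ w t := by
    intro t
    have := ((hasDerivAt_id t).smul_const w).const_add q
    rw [one_smul] at this
    exact this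
  have hγcont : Continuous γ := by
    apply Continuous.add continuous_const
    exact continuous_id.smul continuous_const
  have hγ0 : γ 0 = q := by simp [hγdef]
  have hγ1 : γ 1 = x := by simp [hγdef, hw]
  -- bound on Γ along the segment
  obtain ⟨t0, ht0, hB0⟩ := (isCompact_Icc (a := (0:ℝ)) (b := 1)).exists_isMaxOn
    ⟨0, by norm_num⟩ ((hΓcont.comp hγcont).norm.continuousOn)
  set B : ℝ := max ‖Γ (γ t0)‖ 0 with hBdef
  have hB : 0 ≤ B := le_max_right _ _
  have hΓB : ∀ t ∈ Icc (0:ℝ) 1, ∀ i k m, |Γ (γ t) i k m| ≤ B := by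
    intro t ht i k m
    have h1 : |Γ (γ t) i k m| ≤ ‖Γ (γ t)‖ :=
      calc |Γ (γ t) i k m| = ‖Γ (γ t) i k m‖ := rfl
        _ ≤ ‖Γ (γ t) i k‖ := norm_le_pi_norm _ m
        _ ≤ ‖Γ (γ t) i‖ := norm_le_pi_norm _ k
        _ ≤ ‖Γ (γ t)‖ := norm_le_pi_norm _ i
    exact h1.trans ((hB0 ht).trans (le_max_left _ _))
  set proj : ℝ → ℝ := fun t => max 0 (min 1 t) with hprojdef
  have hprojmem : ∀ t, proj t ∈ Icc (0:ℝ) 1 :=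
    fun t => ⟨le_max_left _ _, max_le (by norm_num) (min_le_left _ _)⟩
  have hprojeq : ∀ t ∈ Ico (0:ℝ) 1, proj t = t := by
    intro t ht
    simp only [hprojdef]
    rw [min_eq_right ht.2.le, max_eq_right ht.1]
  -- the ODE vector field
  set v : ℝ → ((Fin n → Fin n → ℝ) × (Fin n → ℝ)) → ((Fin n → Fin n → ℝ) × (Fin n → ℝ)) :=
    fun t => Vmap (Γ (γ (proj t))) w with hvdef
  have hlip : ∀ t, LipschitzWith (2 * ‖w‖ * (1 + (n:ℝ)^2 * B)).toNNReal (v t) :=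
    fun t => Vmap_lipschitz _ w B hB (hΓB _ (hprojmem t))
  -- directional derivative formulas
  have hbw : ∀ y i j, fderiv ℝ (fun z => b z i j) y w =
      (nu y i * w j + nu y j * w i)
        - ∑ k, w k * ((∑ m, Γ y i k m * b y m j) + (∑ m, Γ y j k m * b y i m)) := by
    intro y i j
    rw [fderiv_apply_eq_sum']
    rw [Finset.sum_congr rfl fun k _ => by rw [hb' y i j k]]
    have hterm : ∀ k : Fin n, w k * (nu y i * (if j = k then 1 else 0)
        + nu y j * (if i = k then 1 else 0)
        - ∑ m, Γ y i k m * b y m j - ∑ m, Γ y j k m * b y i m)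
      = ((if j = k then nu y i * w k else 0) + (if i = k then nu y j * w k else 0))
        - w k * ((∑ m, Γ y i k m * b y m j) + (∑ m, Γ y j k m * b y i m)) := by
      intro k; split_ifs <;> ring
    rw [Finset.sum_congr rfl fun k _ => hterm k, Finset.sum_sub_distrib,
      Finset.sum_add_distrib, Finset.sum_ite_eq, Finset.sum_ite_eq]
    simp [mul_comm]
  have hnw : ∀ y i, fderiv ℝ (fun z => nu z i) y w =
      - ∑ k, w k * ∑ m, Γ y i k m * nu y m := by
    intro y i
    rw [fderiv_apply_eq_sum']
    rw [Finset.sum_congr rfl fun k _ => by rw [hnu' y i k]]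
    simp [Finset.sum_neg_distrib, mul_comm]
  -- the solution along the segment
  set f : ℝ → ((Fin n → Fin n → ℝ) × (Fin n → ℝ)) := fun t => (b (γ t), nu (γ t)) with hfdef
  have hf' : ∀ t ∈ Ico (0:ℝ) 1, HasDerivAt f (v t (f t)) t := by
    intro t ht
    have hv : v t (f t) = Vmap (Γ (γ t)) w (b (γ t), nu (γ t)) := by
      rw [hvdef]; simp only [hprojeq t ht, hfdef]
    have H1 : HasDerivAt (fun s => b (γ s))
        (fun i j => fderiv ℝ (fun z => b z i j) (γ t) w) t := by
      rw [hasDerivAt_pi]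
      intro i
      rw [hasDerivAt_pi]
      intro j
      exact (((hbdiff i j) (γ t)).hasFDerivAt).comp_hasDerivAt t (hγ t)
    have H2 : HasDerivAt (fun s => nu (γ s))
        (fun i => fderiv ℝ (fun z => nu z i) (γ t) w) t := by
      rw [hasDerivAt_pi]
      intro i
      exact (((hnudiff i) (γ t)).hasFDerivAt).comp_hasDerivAt t (hγ t)
    have hEq : Vmap (Γ (γ t)) w (b (γ t), nu (γ t))
        = (fun i j => fderiv ℝ (fun z => b z i j) (γ t) w,
           fun i => fderiv ℝ (fun z => nu z i) (γ t) w) := by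
      refine Prod.ext ?_ ?_
      · funext i j
        show (Vmap (Γ (γ t)) w (b (γ t), nu (γ t))).1 i j
          = fderiv ℝ (fun z => b z i j) (γ t) w
        rw [hbw]; rfl
      · funext i
        show (Vmap (Γ (γ t)) w (b (γ t), nu (γ t))).2 i
          = fderiv ℝ (fun z => nu z i) (γ t) w
        rw [hnw]; rfl
    rw [hv, hEq]
    exact H1.prodMk H2
  have hfcont : Continuous f := by
    refine Continuous.prodMk ?_ ?_
    · exact continuous_pi fun i => continuous_pi fun j => ((hbdiff i j).continuous).comp hγcont
    · exact continuous_pi fun i => ((hnudiff i).continuous).comp hγcont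
  have heq : EqOn f (fun _ => (0 : (Fin n → Fin n → ℝ) × (Fin n → ℝ))) (Icc 0 1) := by
    apply ODE_solution_unique hlip hfcont.continuousOn
      (fun t ht => ((hf' t ht).hasDerivWithinAt))
      continuousOn_const
      (fun t ht => by
        have : v t 0 = 0 := Vmap_zero _ _
        simpa [this] using (hasDerivAt_const t
          (0 : (Fin n → Fin n → ℝ) × (Fin n → ℝ))).hasDerivWithinAt)
    simp [hfdef, hγ0, hbq, hnuq]
  have h1 := heq (right_mem_Icc.2 zero_le_one)
  rw [hfdef] at h1
  simp only [hγ1] at h1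
  exact ⟨congrArg Prod.fst h1, congrArg Prod.snd h1⟩

/-- The system `a^{ij}_{,k} = λ^i δ^j_k + λ^j δ^i_k`, `λ^i_{,j} = μ δ^i_j` (with `μ` a
constant) on a connected manifold is of Cauchy–Frobenius type: a solution is uniquely
determined by its value at one point `q`. -/
theorem stmt9 {n : ℕ} (hn : 2 ≤ n)
    (Γ : (Fin n → ℝ) → Fin n → Fin n → Fin n → ℝ)
    (hΓsym : ∀ x i j k, Γ x i j k = Γ x i k j)
    (hΓsmooth : ContDiff ℝ (⊤ : ℕ∞) Γ)
    (μ : ℝ)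
    (a a' : (Fin n → ℝ) → Fin n → Fin n → ℝ)
    (lam lam' : (Fin n → ℝ) → Fin n → ℝ)
    (hasym : ∀ x i j, a x i j = a x j i) (ha'sym : ∀ x i j, a' x i j = a' x j i)
    (hadiff : ∀ i j, Differentiable ℝ fun x => a x i j)
    (ha'diff : ∀ i j, Differentiable ℝ fun x => a' x i j)
    (hlamdiff : ∀ i, Differentiable ℝ fun x => lam x i)
    (hlam'diff : ∀ i, Differentiable ℝ fun x => lam' x i)
    (hsola : ∀ x i j k, covDeriv20 Γ a x k i j =
      lam x i * (if j = k then 1 else 0) + lam x j * (if i = k then 1 else 0))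
    (hsollam : ∀ x i j, covDerivVec Γ lam x j i = μ * (if i = j then 1 else 0))
    (hsola' : ∀ x i j k, covDeriv20 Γ a' x k i j =
      lam' x i * (if j = k then 1 else 0) + lam' x j * (if i = k then 1 else 0))
    (hsollam' : ∀ x i j, covDerivVec Γ lam' x j i = μ * (if i = j then 1 else 0))
    (q : Fin n → ℝ)
    (haq : a q = a' q) (hlamq : lam q = lam' q) :
    a = a' ∧ lam = lam' := by
  set b : (Fin n → ℝ) → Fin n → Fin n → ℝ := fun y i j => a y i j - a' y i j with hbdef
  set nu : (Fin n → ℝ) → Fin n → ℝ := fun y i => lam y i - lam' y i with hnudef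
  have hbdiff : ∀ i j, Differentiable ℝ fun x => b x i j :=
    fun i j => (hadiff i j).sub (ha'diff i j)
  have hnudiff : ∀ i, Differentiable ℝ fun x => nu x i :=
    fun i => (hlamdiff i).sub (hlam'diff i)
  have hb' : ∀ y i j k, fderiv ℝ (fun z => b z i j) y (Pi.single k 1) =
      nu y i * (if j = k then 1 else 0) + nu y j * (if i = k then 1 else 0)
        - ∑ m, Γ y i k m * b y m j - ∑ m, Γ y j k m * b y i m := by
    intro y i j k
    have HA := hsola y i j k
    have HA' := hsola' y i j k
    unfold covDeriv20 at HA HA'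
    have hfd : fderiv ℝ (fun z => b z i j) y (Pi.single k 1)
        = fderiv ℝ (fun z => a z i j) y (Pi.single k 1)
          - fderiv ℝ (fun z => a' z i j) y (Pi.single k 1) := by
      rw [hbdef]
      rw [fderiv_fun_sub ((hadiff i j) y) ((ha'diff i j) y)]
      rfl
    rw [hfd, hbdef, hnudef]
    simp only [mul_sub, sub_mul, Finset.sum_sub_distrib]
    linarith [HA, HA']
  have hnu' : ∀ y i k, fderiv ℝ (fun z => nu z i) y (Pi.single k 1) =
      - ∑ m, Γ y i k m * nu y m := by
    intro y i k
    have HL := hsollam y i k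
    have HL' := hsollam' y i k
    unfold covDerivVec at HL HL'
    have hfd : fderiv ℝ (fun z => nu z i) y (Pi.single k 1)
        = fderiv ℝ (fun z => lam z i) y (Pi.single k 1)
          - fderiv ℝ (fun z => lam' z i) y (Pi.single k 1) := by
      rw [hnudef]
      rw [fderiv_fun_sub ((hlamdiff i) y) ((hlam'diff i) y)]
      rfl
    rw [hfd, hnudef]
    simp only [mul_sub, Finset.sum_sub_distrib]
    linarith [HL, HL']
  have hbq : b q = 0 := by funext i j; simp [hbdef, haq]
  have hnuq : nu q = 0 := by funext i; simp [hnudef, hlamq]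
  have key : ∀ x, b x = 0 ∧ nu x = 0 := fun x =>
    mainAux Γ hΓsmooth.continuous b nu hbdiff hnudiff hb' hnu' q x hbq hnuq
  constructor
  · funext x i j
    have := congrFun (congrFun (key x).1 i) j
    simp only [hbdef, Pi.zero_apply] at this
    linarith
  · funext x i
    have := congrFun (key x).2 i
    simp only [hnudef, Pi.zero_apply] at this
    linarith
end

section
/- Let g be a Riemannian metric on a connected manifold M whose holonomy group at some point q acts transitively on the g-unit sphere of T_qM, and let F : TM → ℝ≥0 be a Finsler metric invariant under g-parallel transport (with F|_{T_xM} a norm for each x). Then F(ξ) = c·√(g(ξ,ξ)) for a constant c > 0, i.e., F is Riemannian. -/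
/-- Covariant derivative `(∇g)_{k i j}` of a `(0,2)`-tensor field (used to express the
Levi-Civita condition `∇g = 0`). -/
noncomputable def covDeriv02 {n : ℕ} (Γ : (Fin n → ℝ) → Fin n → Fin n → Fin n → ℝ)
    (a : (Fin n → ℝ) → Fin n → Fin n → ℝ) (x : Fin n → ℝ) (k i j : Fin n) : ℝ :=
  fderiv ℝ (fun y => a y i j) x (Pi.single k 1)
    - ∑ m, Γ x m k i * a x m j - ∑ m, Γ x m k j * a x i m

/-- `X` is a parallel vector field along the curve `γ`:
`Ẋ^i + Γ^i_{jk}(γ(t)) X^j γ̇^k = 0`. -/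
def IsParallelAlong {n : ℕ} (Γ : (Fin n → ℝ) → Fin n → Fin n → Fin n → ℝ)
    (γ X : ℝ → Fin n → ℝ) : Prop :=
  ∀ t i, deriv (fun s => X s i) t
    + ∑ j, ∑ k, Γ (γ t) i j k * X t j * deriv (fun s => γ s k) t = 0

/-- The quadratic form of the metric `g` at `x`. -/
def quadForm {n : ℕ} (g : (Fin n → ℝ) → Fin n → Fin n → ℝ)
    (x ξ : Fin n → ℝ) : ℝ :=
  ∑ i, ∑ j, g x i j * ξ i * ξ j


open MeasureTheory intervalIntegral Set

section ODE
variable {n : ℕ}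

private lemma mulvec_norm_le (M : Fin n → Fin n → ℝ) (v : Fin n → ℝ) :
    ‖(fun i => ∑ j, M i j * v j : Fin n → ℝ)‖ ≤ (∑ i, ∑ j, |M i j|) * ‖v‖ := by
  have hC : 0 ≤ (∑ i, ∑ j, |M i j|) * ‖v‖ := by positivity
  rw [pi_norm_le_iff_of_nonneg hC]
  intro i
  calc ‖∑ j, M i j * v j‖ ≤ ∑ j, ‖M i j * v j‖ := norm_sum_le _ _
    _ ≤ ∑ j, |M i j| * ‖v‖ := by
        refine Finset.sum_le_sum fun j _ => ?_
        rw [norm_mul]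
        exact mul_le_mul_of_nonneg_left (norm_le_pi_norm v j) (abs_nonneg _)
    _ ≤ (∑ i, ∑ j, |M i j|) * ‖v‖ := by
        rw [← Finset.sum_mul]
        exact mul_le_mul_of_nonneg_right (Finset.single_le_sum
          (f := fun i => ∑ j, |M i j|) (fun i _ => by positivity)
          (Finset.mem_univ i)) (norm_nonneg v)

/-- Global existence for a linear ODE whose coefficient matrix vanishes outside `(0,1)`. -/
lemma linear_ode_exists (M : ℝ → Fin n → Fin n → ℝ) (hMcont : Continuous M)
    (hsupp : ∀ t, t < 0 ∨ 1 < t → M t = 0) (ξ : Fin n → ℝ) :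
    ∃ X : ℝ → Fin n → ℝ, ContDiff ℝ 1 X ∧ X 0 = ξ ∧
      ∀ t, HasDerivAt X (fun i => ∑ j, M t i j * X t j) t := by
  classical
  set f : ℝ → (Fin n → ℝ) → (Fin n → ℝ) := fun t v i => ∑ j, M t i j * v j with hf_def
  -- continuity of f in both variables
  have hfc : Continuous fun p : ℝ × (Fin n → ℝ) => f p.1 p.2 := by
    refine continuous_pi fun i => ?_
    refine continuous_finset_sum _ fun j _ => ?_
    exact ((continuous_apply j).comp ((continuous_apply i).comp
      (hMcont.comp continuous_fst))).mul ((continuous_apply j).comp continuous_snd)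
  have hflin : ∀ t (v w : Fin n → ℝ), f t v - f t w = f t (v - w) := by
    intro t v w; funext i
    simp only [hf_def, Pi.sub_apply, ← Finset.sum_sub_distrib]
    exact Finset.sum_congr rfl fun j _ => by ring
  -- bound
  have hκ : Continuous fun t => ∑ i, ∑ j, |M t i j| := by
    refine continuous_finset_sum _ fun i _ => continuous_finset_sum _ fun j _ => ?_
    exact (((continuous_apply j).comp ((continuous_apply i).comp hMcont)) : Continuous fun t => M t i j).abs
  obtain ⟨t₀, _, ht₀⟩ := (isCompact_Icc (a := (0:ℝ)) (b := 1)).exists_isMaxOn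
    (Set.nonempty_Icc.2 zero_le_one) (hκ.continuousOn)
  set K : ℝ := ∑ i, ∑ j, |M t₀ i j| with hK_def
  have hK0 : 0 ≤ K := by positivity
  have hbound : ∀ t (v : Fin n → ℝ), ‖f t v‖ ≤ K * ‖v‖ := by
    intro t v
    rcases le_or_gt 0 t with h0 | h0
    · rcases le_or_gt t 1 with h1 | h1
      · exact le_trans (mulvec_norm_le _ _)
          (mul_le_mul_of_nonneg_right (ht₀ ⟨h0, h1⟩) (norm_nonneg _))
      · have h : M t = 0 := hsupp t (Or.inr h1)
        have : f t v = 0 := by funext i; simp [hf_def, h]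
        rw [this]; simp; positivity
    · have h : M t = 0 := hsupp t (Or.inl h0)
      have : f t v = 0 := by funext i; simp [hf_def, h]
      rw [this]; simp; positivity
  -- integrability helpers
  have hcontZ : ∀ (Z : ℝ → Fin n → ℝ), Continuous Z → Continuous fun s => f s (Z s) :=
    fun Z hZ => hfc.comp (continuous_id.prodMk hZ)
  have hint : ∀ (Z : ℝ → Fin n → ℝ), Continuous Z → ∀ a b,
      IntervalIntegrable (fun s => f s (Z s)) volume a b :=
    fun Z hZ a b => (hcontZ Z hZ).intervalIntegrable a b
  have hvanish_right : ∀ (Z : ℝ → Fin n → ℝ), ∀ t, 1 ≤ t →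
      (∫ s in (1:ℝ)..t, f s (Z s)) = 0 := by
    intro Z t ht
    rw [intervalIntegral.integral_of_le ht, MeasureTheory.integral_Ioc_eq_integral_Ioo,
      MeasureTheory.setIntegral_congr_fun measurableSet_Ioo
        (g := fun _ => (0 : Fin n → ℝ)) (fun s hs => by
          funext i; simp [hf_def, hsupp s (Or.inr hs.1)])]
    simp
  have hvanish_left : ∀ (Z : ℝ → Fin n → ℝ), ∀ t, t ≤ 0 →
      (∫ s in t..(0:ℝ), f s (Z s)) = 0 := by
    intro Z t ht
    rw [intervalIntegral.integral_of_le ht, MeasureTheory.integral_Ioc_eq_integral_Ioo,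
      MeasureTheory.setIntegral_congr_fun measurableSet_Ioo
        (g := fun _ => (0 : Fin n → ℝ)) (fun s hs => by
          funext i; simp [hf_def, hsupp s (Or.inl hs.2)])]
    simp
  set prim : (ℝ → Fin n → ℝ) → ℝ → (Fin n → ℝ) :=
    fun Z t => ξ + ∫ s in (0:ℝ)..t, f s (Z s) with hprim_def
  have hprim_deriv : ∀ (Z : ℝ → Fin n → ℝ) (hZ : Continuous Z) (t : ℝ),
      HasDerivAt (prim Z) (f t (Z t)) t := by
    intro Z hZ t
    exact (intervalIntegral.integral_hasDerivAt_right (hint Z hZ 0 t)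
      ((hcontZ Z hZ).stronglyMeasurable.stronglyMeasurableAtFilter)
      (hcontZ Z hZ).continuousAt).const_add ξ
  have hprim_cont : ∀ (Z : ℝ → Fin n → ℝ), Continuous Z → Continuous (prim Z) :=
    fun Z hZ => continuous_iff_continuousAt.2 fun t => (hprim_deriv Z hZ t).continuousAt
  have hprim_right : ∀ (Z : ℝ → Fin n → ℝ) (hZ : Continuous Z) t, 1 ≤ t →
      prim Z t = prim Z 1 := by
    intro Z hZ t ht
    simp only [hprim_def]
    congr 1
    rw [← intervalIntegral.integral_add_adjacent_intervals (hint Z hZ 0 1) (hint Z hZ 1 t),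
      hvanish_right Z t ht, add_zero]
  have hprim_left : ∀ (Z : ℝ → Fin n → ℝ) (hZ : Continuous Z) t, t ≤ 0 →
      prim Z t = prim Z 0 := by
    intro Z hZ t ht
    simp only [hprim_def, intervalIntegral.integral_same]
    congr 1
    rw [intervalIntegral.integral_symm t 0, hvanish_left Z t ht, neg_zero]
  have hprim_bdd : ∀ (Z : ℝ → Fin n → ℝ), Continuous Z → ∃ C, ∀ t, ‖prim Z t‖ ≤ C := by
    intro Z hZ
    obtain ⟨s₀, hs₀, hmax⟩ := (isCompact_Icc (a := (0:ℝ)) (b := 1)).exists_isMaxOn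
      (Set.nonempty_Icc.2 zero_le_one) ((continuous_norm.comp (hprim_cont Z hZ)).continuousOn)
    refine ⟨‖prim Z s₀‖, fun t => ?_⟩
    rcases le_or_gt t 0 with h | h
    · rw [hprim_left Z hZ t h]
      exact hmax (Set.mem_Icc.2 ⟨le_refl 0, zero_le_one⟩)
    rcases le_or_gt t 1 with h1 | h1
    · exact hmax (Set.mem_Icc.2 ⟨h.le, h1⟩)
    · rw [hprim_right Z hZ t h1.le]
      exact hmax (Set.mem_Icc.2 ⟨zero_le_one, le_refl 1⟩)
  -- the Picard operator on bounded continuous functions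
  have hPdef : ∀ X : BoundedContinuousFunction ℝ (Fin n → ℝ),
      ∃ Y : BoundedContinuousFunction ℝ (Fin n → ℝ), ∀ t, Y t = prim (⇑X) t := by
    intro X
    obtain ⟨C, hC⟩ := hprim_bdd ⇑X X.continuous
    exact ⟨BoundedContinuousFunction.ofNormedAddCommGroup (prim ⇑X)
      (hprim_cont ⇑X X.continuous) C hC, fun t => rfl⟩
  choose P hP using hPdef
  -- the key factorial estimate on [0,1]
  have hest : ∀ (N : ℕ) (X Y : BoundedContinuousFunction ℝ (Fin n → ℝ)),
      ∀ t ∈ Set.Icc (0:ℝ) 1,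
      ‖(P^[N] X) t - (P^[N] Y) t‖ ≤ dist X Y * (K ^ N * t ^ N / N.factorial) := by
    intro N
    induction N with
    | zero =>
      intro X Y t ht
      simpa [dist_eq_norm] using BoundedContinuousFunction.dist_coe_le_dist (f := X) (g := Y) t
    | succ N ih =>
      intro X Y t ht
      rw [Function.iterate_succ_apply', Function.iterate_succ_apply']
      have h1 : (P (P^[N] X)) t - (P (P^[N] Y)) t
          = ∫ s in (0:ℝ)..t, (f s ((P^[N] X) s) - f s ((P^[N] Y) s)) := by
        rw [hP _ t, hP _ t]
        simp only [hprim_def]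
        rw [intervalIntegral.integral_sub (hint _ (P^[N] X).continuous 0 t)
          (hint _ (P^[N] Y).continuous 0 t)]
        abel
      rw [h1]
      have hb : ‖∫ s in (0:ℝ)..t, (f s ((P^[N] X) s) - f s ((P^[N] Y) s))‖
          ≤ |∫ s in (0:ℝ)..t, K * (dist X Y * (K ^ N * s ^ N / N.factorial))| := by
        apply intervalIntegral.norm_integral_le_abs_of_norm_le
        · refine (MeasureTheory.ae_restrict_iff' measurableSet_uIoc).2
            (Filter.Eventually.of_forall fun s hs => ?_)
          rw [Set.uIoc_of_le ht.1] at hs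
          have hs01 : s ∈ Set.Icc (0:ℝ) 1 := ⟨hs.1.le, hs.2.trans ht.2⟩
          rw [hflin]
          calc ‖f s ((P^[N] X) s - (P^[N] Y) s)‖
              ≤ K * ‖(P^[N] X) s - (P^[N] Y) s‖ := hbound s _
            _ ≤ K * (dist X Y * (K ^ N * s ^ N / N.factorial)) :=
                mul_le_mul_of_nonneg_left (ih X Y s hs01) hK0
        · exact Continuous.intervalIntegrable (by fun_prop) 0 t
      have hcomp : (∫ s in (0:ℝ)..t, K * (dist X Y * (K ^ N * s ^ N / N.factorial)))
          = dist X Y * (K ^ (N + 1) * t ^ (N + 1) / (N + 1).factorial) := by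
        rw [intervalIntegral.integral_congr
          (g := fun s => (K * dist X Y * K ^ N / N.factorial) * s ^ N)
          (fun s _ => by ring)]
        rw [intervalIntegral.integral_const_mul, integral_pow]
        have hfac : ((N:ℝ) + 1) ≠ 0 := Nat.cast_add_one_ne_zero N
        have hfacN : ((N.factorial : ℝ)) ≠ 0 := by
          exact_mod_cast N.factorial_ne_zero
        rw [Nat.factorial_succ]
        push_cast
        field_simp
        ring
      rw [hcomp] at hb
      refine hb.trans ?_
      rw [abs_of_nonneg (mul_nonneg dist_nonneg (div_nonneg
        (mul_nonneg (pow_nonneg hK0 _) (pow_nonneg ht.1 _)) (by positivity)))]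
  -- global Lipschitz bound for iterates
  have hglob : ∀ (N : ℕ) (X Y : BoundedContinuousFunction ℝ (Fin n → ℝ)),
      dist (P^[N] X) (P^[N] Y) ≤ (K ^ N / N.factorial) * dist X Y := by
    intro N X Y
    have hnn : (0:ℝ) ≤ K ^ N / N.factorial * dist X Y := by positivity
    rw [BoundedContinuousFunction.dist_le hnn]
    intro t
    have key : ∀ t' ∈ Set.Icc (0:ℝ) 1,
        dist ((P^[N] X) t') ((P^[N] Y) t') ≤ K ^ N / N.factorial * dist X Y := by
      intro t' ht'
      rw [dist_eq_norm]
      refine (hest N X Y t' ht').trans ?_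
      rw [mul_comm]
      have h1 : K ^ N * t' ^ N ≤ K ^ N := by
        have := mul_le_mul_of_nonneg_left (pow_le_one₀ ht'.1 ht'.2 (n := N)) (pow_nonneg hK0 N)
        simpa using this
      refine mul_le_mul_of_nonneg_right ?_ dist_nonneg
      exact div_le_div_of_nonneg_right h1 (by positivity)
    have hPconst : ∀ (Z : BoundedContinuousFunction ℝ (Fin n → ℝ)) (t : ℝ),
        (t ≤ 0 → P Z t = P Z 0) ∧ (1 ≤ t → P Z t = P Z 1) := by
      intro Z t
      constructor
      · intro h; rw [hP Z t, hP Z 0, hprim_left _ Z.continuous t h]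
      · intro h; rw [hP Z t, hP Z 1, hprim_right _ Z.continuous t h]
    cases N with
    | zero => simpa [dist_eq_norm] using
        BoundedContinuousFunction.dist_coe_le_dist (f := X) (g := Y) t
    | succ N =>
      rcases le_or_gt t 0 with h | h
      · rw [Function.iterate_succ_apply' P N X, Function.iterate_succ_apply' P N Y,
          (hPconst (P^[N] X) t).1 h, (hPconst (P^[N] Y) t).1 h,
          ← Function.iterate_succ_apply' P N X, ← Function.iterate_succ_apply' P N Y]
        exact key 0 (Set.mem_Icc.2 ⟨le_refl 0, zero_le_one⟩)
      rcases le_or_gt t 1 with h1 | h1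
      · exact key t (Set.mem_Icc.2 ⟨h.le, h1⟩)
      · rw [Function.iterate_succ_apply' P N X, Function.iterate_succ_apply' P N Y,
          (hPconst (P^[N] X) t).2 h1.le, (hPconst (P^[N] Y) t).2 h1.le,
          ← Function.iterate_succ_apply' P N X, ← Function.iterate_succ_apply' P N Y]
        exact key 1 (Set.mem_Icc.2 ⟨zero_le_one, le_refl 1⟩)
  -- choose N making the iterate a contraction
  obtain ⟨N, hN⟩ : ∃ N : ℕ, K ^ N / N.factorial < 1 :=
    ((FloorSemiring.tendsto_pow_div_factorial_atTop K).eventually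
      (gt_mem_nhds zero_lt_one)).exists
  set c : NNReal := Real.toNNReal (K ^ N / N.factorial) with hc_def
  have hlip : LipschitzWith c (P^[N]) := LipschitzWith.of_dist_le_mul fun X Y => by
    rw [hc_def, Real.coe_toNNReal _ (by positivity)]; exact hglob N X Y
  have hcontr : ContractingWith c (P^[N]) := ⟨Real.toNNReal_lt_one.2 hN, hlip⟩
  set W := ContractingWith.fixedPoint (P^[N]) hcontr with hW_def
  have hWfix : P^[N] W = W := hcontr.fixedPoint_isFixedPt
  have hPW : P W = W := by
    have h1 : P^[N] (P W) = P W := by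
      rw [← Function.iterate_succ_apply P N W, Function.iterate_succ_apply' P N W, hWfix]
    exact hcontr.fixedPoint_unique h1
  have hXeq : ∀ t, (W : ℝ → Fin n → ℝ) t = prim (⇑W) t := fun t => by
    conv_lhs => rw [← hPW]
    exact hP W t
  have hder : ∀ t, HasDerivAt (⇑W : ℝ → Fin n → ℝ) (f t (W t)) t := fun t =>
    (hprim_deriv ⇑W W.continuous t).congr_of_eventuallyEq
      (Filter.Eventually.of_forall fun s => hXeq s)
  have hX0 : (W : ℝ → Fin n → ℝ) 0 = ξ := by
    rw [hXeq 0]; simp [hprim_def]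
  have hdiff : Differentiable ℝ (⇑W : ℝ → Fin n → ℝ) := fun t => (hder t).differentiableAt
  have hderiv_eq : (deriv (⇑W : ℝ → Fin n → ℝ)) = fun t => f t (W t) :=
    funext fun t => (hder t).deriv
  have hcd : ContDiff ℝ 1 (⇑W : ℝ → Fin n → ℝ) := contDiff_one_iff_deriv.2
    ⟨hdiff, by rw [hderiv_eq]; exact hfc.comp (continuous_id.prodMk W.continuous)⟩
  exact ⟨⇑W, hcd, hX0, hder⟩

end ODE


private lemma sum_nest4 {n : ℕ} (F : Fin n → Fin n → Fin n → Fin n → ℝ) :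
    ∑ i, ∑ j, ∑ k, ∑ m, F i j k m
      = ∑ p : Fin n × Fin n × Fin n × Fin n, F p.1 p.2.1 p.2.2.1 p.2.2.2 := by
  simp [Fintype.sum_prod_type]

private lemma alg_cancel {n : ℕ} (a : Fin n → Fin n → ℝ) (G : Fin n → Fin n → Fin n → ℝ)
    (u v u' : Fin n → ℝ) (D : Fin n → Fin n → ℝ)
    (hsym : ∀ i j, a i j = a j i) (hGsym : ∀ i j k, G i j k = G i k j)
    (hD : ∀ i j, D i j = ∑ k, v k * ((∑ m, G m k i * a m j) + (∑ m, G m k j * a i m)))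
    (hu' : ∀ i, u' i = -∑ j, ∑ k, G i j k * u j * v k) :
    ∑ i, ∑ j, (D i j * u i * u j + a i j * u' i * u j + a i j * u i * u' j) = 0 := by
  classical
  set T : ℝ := ∑ i, ∑ j, ∑ k, ∑ m, v k * G m k i * a m j * u i * u j with hT
  have S1 : (∑ i, ∑ j, D i j * u i * u j) = T + T := by
    have e1 : ∀ i j : Fin n, D i j * u i * u j
        = (∑ k, ∑ m, v k * G m k i * a m j * u i * u j)
          + (∑ k, ∑ m, v k * G m k j * a i m * u i * u j) := by
      intro i j
      rw [hD, Finset.sum_mul, Finset.sum_mul, ← Finset.sum_add_distrib]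
      refine Finset.sum_congr rfl fun k _ => ?_
      rw [mul_add, add_mul, add_mul, Finset.mul_sum, Finset.mul_sum,
        Finset.sum_mul, Finset.sum_mul, Finset.sum_mul, Finset.sum_mul]
      exact congrArg₂ (· + ·) (Finset.sum_congr rfl fun m _ => by ring)
        (Finset.sum_congr rfl fun m _ => by ring)
    calc ∑ i, ∑ j, D i j * u i * u j
        = (∑ i, ∑ j, ∑ k, ∑ m, v k * G m k i * a m j * u i * u j)
          + (∑ i, ∑ j, ∑ k, ∑ m, v k * G m k j * a i m * u i * u j) := by
          simp only [e1, Finset.sum_add_distrib]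
      _ = T + T := by
          congr 1
          rw [Finset.sum_comm]
          refine Finset.sum_congr rfl fun i _ => Finset.sum_congr rfl fun j _ =>
            Finset.sum_congr rfl fun k _ => Finset.sum_congr rfl fun m _ => ?_
          rw [hsym j m]
          ring
  have S2 : (∑ i, ∑ j, a i j * u' i * u j) = -T := by
    have e2 : ∀ i j : Fin n, a i j * u' i * u j
        = -∑ p, ∑ k, a i j * G i p k * u p * v k * u j := by
      intro i j
      rw [hu', mul_neg, neg_mul, Finset.mul_sum, Finset.sum_mul]
      refine congrArg Neg.neg (Finset.sum_congr rfl fun p _ => ?_)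
      rw [Finset.mul_sum, Finset.sum_mul]
      exact Finset.sum_congr rfl fun k _ => by ring
    have swap : (∑ i, ∑ j, ∑ k, ∑ m, a i j * G i k m * u k * v m * u j)
        = ∑ i, ∑ j, ∑ k, ∑ m, a m j * G m i k * u i * v k * u j := by
      rw [sum_nest4, sum_nest4 (fun i j k m => a m j * G m i k * u i * v k * u j)]
      exact Fintype.sum_equiv
        ⟨fun q => (q.2.2.1, q.2.1, q.2.2.2, q.1),
         fun q => (q.2.2.2, q.2.1, q.1, q.2.2.1),
         fun q => rfl, fun q => rfl⟩ _ _ fun q => rfl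
    have e3 : (∑ i, ∑ j, ∑ k, ∑ m, a i j * G i k m * u k * v m * u j) = T := by
      rw [swap, hT]
      refine Finset.sum_congr rfl fun i _ => Finset.sum_congr rfl fun j _ =>
        Finset.sum_congr rfl fun k _ => Finset.sum_congr rfl fun m _ => ?_
      rw [hGsym m i k]
      ring
    simp only [e2, Finset.sum_neg_distrib]
    rw [e3]
  have S3 : (∑ i, ∑ j, a i j * u i * u' j) = -T := by
    calc ∑ i, ∑ j, a i j * u i * u' j
        = ∑ j, ∑ i, a i j * u i * u' j := Finset.sum_comm
      _ = ∑ i, ∑ j, a i j * u' i * u j := Finset.sum_congr rfl fun i _ =>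
          Finset.sum_congr rfl fun j _ => by rw [hsym]; ring
      _ = -T := S2
  calc ∑ i, ∑ j, (D i j * u i * u j + a i j * u' i * u j + a i j * u i * u' j)
      = (∑ i, ∑ j, D i j * u i * u j) + (∑ i, ∑ j, a i j * u' i * u j)
        + (∑ i, ∑ j, a i j * u i * u' j) := by
        simp only [Finset.sum_add_distrib]
    _ = 0 := by rw [S1, S2, S3]; ring

private lemma quadForm_parallel_const {n : ℕ}
    (g : (Fin n → ℝ) → Fin n → Fin n → ℝ)
    (hgsym : ∀ x i j, g x i j = g x j i)
    (hgsmooth : ContDiff ℝ (⊤ : ℕ∞) g)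
    (Γ : (Fin n → ℝ) → Fin n → Fin n → Fin n → ℝ)
    (hΓsym : ∀ x i j k, Γ x i j k = Γ x i k j)
    (hmetric : ∀ x k i j, covDeriv02 Γ g x k i j = 0)
    (γ X : ℝ → Fin n → ℝ) (hγ : ContDiff ℝ 1 γ) (hX : ContDiff ℝ 1 X)
    (hpar : IsParallelAlong Γ γ X) (t s : ℝ) :
    quadForm g (γ t) (X t) = quadForm g (γ s) (X s) := by
  classical
  have hγdiff : Differentiable ℝ γ := hγ.differentiable one_ne_zero
  have hXdiff : Differentiable ℝ X := hX.differentiable one_ne_zero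
  have hgij : ∀ i j, ContDiff ℝ (⊤ : ℕ∞) fun y => g y i j := fun i j =>
    contDiff_pi.1 (contDiff_pi.1 hgsmooth i) j
  set v : ℝ → Fin n → ℝ := fun t => deriv γ t with hv_def
  set u' : ℝ → Fin n → ℝ := fun t => deriv X t with hu'_def
  have hvγ : ∀ t k, deriv (fun s => γ s k) t = v t k := fun t k =>
    (hasDerivAt_pi.1 (hγdiff t).hasDerivAt k).deriv
  have hu'X : ∀ t i, deriv (fun s => X s i) t = u' t i := fun t i =>
    (hasDerivAt_pi.1 (hXdiff t).hasDerivAt i).deriv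
  set Q : ℝ → ℝ := fun t => quadForm g (γ t) (X t) with hQ_def
  have hQder : ∀ t, HasDerivAt Q 0 t := by
    intro t
    set D : Fin n → Fin n → ℝ :=
      fun i j => (fderiv ℝ (fun y => g y i j) (γ t)) (v t) with hD_def
    have hgcomp : ∀ i j, HasDerivAt (fun s => g (γ s) i j) (D i j) t := fun i j =>
      (((hgij i j).differentiable (by simp) (γ t)).hasFDerivAt).comp_hasDerivAt t
        (hγdiff t).hasDerivAt
    have hXi : ∀ i, HasDerivAt (fun s => X s i) (u' t i) t := fun i =>
      hasDerivAt_pi.1 (hXdiff t).hasDerivAt i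
    have hterm : ∀ i j, HasDerivAt (fun s => g (γ s) i j * X s i * X s j)
        ((D i j * X t i + g (γ t) i j * u' t i) * X t j
          + g (γ t) i j * X t i * u' t j) t := fun i j =>
      ((hgcomp i j).mul (hXi i)).mul (hXi j)
    have hsum : HasDerivAt Q (∑ i, ∑ j, ((D i j * X t i + g (γ t) i j * u' t i) * X t j
        + g (γ t) i j * X t i * u' t j)) t := by
      apply HasDerivAt.fun_sum
      intro i _
      exact HasDerivAt.fun_sum fun j _ => hterm i j
    have hzero : (∑ i, ∑ j, ((D i j * X t i + g (γ t) i j * u' t i) * X t j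
        + g (γ t) i j * X t i * u' t j)) = 0 := by
      have hre : (∑ i, ∑ j, ((D i j * X t i + g (γ t) i j * u' t i) * X t j
          + g (γ t) i j * X t i * u' t j))
          = ∑ i, ∑ j, (D i j * X t i * X t j + g (γ t) i j * u' t i * X t j
            + g (γ t) i j * X t i * u' t j) :=
        Finset.sum_congr rfl fun i _ => Finset.sum_congr rfl fun j _ => by ring
      rw [hre]
      apply alg_cancel (g (γ t)) (Γ (γ t)) (X t) (v t) (u' t) D
        (hgsym (γ t)) (hΓsym (γ t))
      · -- hD from hmetric
        intro i j
        have hsingle_eq : ∀ k : Fin n, (fun j => if k = j then (1:ℝ) else 0) = Pi.single k 1 :=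
          fun k => funext fun j => by simp [Pi.single_apply, eq_comm]
        have hL : ∀ w : Fin n → ℝ, (fderiv ℝ (fun y => g y i j) (γ t)) w
            = ∑ k, w k * (fderiv ℝ (fun y => g y i j) (γ t)) (Pi.single k 1) := by
          intro w
          have h := LinearMap.pi_apply_eq_sum_univ
            ((fderiv ℝ (fun y => g y i j) (γ t)) : (Fin n → ℝ) →L[ℝ] ℝ).toLinearMap w
          simpa [smul_eq_mul, hsingle_eq] using h
        have hsingle : ∀ k, (fderiv ℝ (fun y => g y i j) (γ t)) (Pi.single k 1)
            = (∑ m, Γ (γ t) m k i * g (γ t) m j) + (∑ m, Γ (γ t) m k j * g (γ t) i m) := by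
          intro k
          have h0 := hmetric (γ t) k i j
          unfold covDeriv02 at h0
          linarith
        show (fderiv ℝ (fun y => g y i j) (γ t)) (v t) = _
        rw [hL (v t)]
        exact Finset.sum_congr rfl fun k _ => by rw [hsingle k]
      · -- hu' from hpar
        intro i
        have h0 := hpar t i
        rw [hu'X t i] at h0
        have h1 : (∑ j, ∑ k, Γ (γ t) i j k * X t j * deriv (fun s => γ s k) t)
            = ∑ j, ∑ k, Γ (γ t) i j k * X t j * v t k :=
          Finset.sum_congr rfl fun j _ => Finset.sum_congr rfl fun k _ => by rw [hvγ t k]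
        rw [h1] at h0
        linarith
    rw [← hzero]
    exact hsum
  have : ∀ a b : ℝ, Q a = Q b :=
    is_const_of_deriv_eq_zero (fun x => (hQder x).differentiableAt) fun x => (hQder x).deriv
  exact this t s


/-- If the holonomy group of a Riemannian metric `g` at a point `q` (parallel transports
along loops at `q`) acts transitively on the `g`-unit sphere of `T_qM`, then every Finsler
metric `F` invariant under `g`-parallel transport (with each `F|_{TₓM}` a norm) is
Riemannian: `F(x, ξ) = c √(g(ξ, ξ))` for a constant `c > 0`. -/
theorem stmt16 {n : ℕ} (hn : 1 ≤ n)
    (g : (Fin n → ℝ) → Fin n → Fin n → ℝ)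
    (hgsym : ∀ x i j, g x i j = g x j i)
    (hgpos : ∀ x ξ, ξ ≠ 0 → 0 < quadForm g x ξ)
    (hgsmooth : ContDiff ℝ (⊤ : ℕ∞) g)
    (Γ : (Fin n → ℝ) → Fin n → Fin n → Fin n → ℝ)
    (hΓsmooth : ContDiff ℝ (⊤ : ℕ∞) Γ)
    -- `Γ` is the Levi-Civita connection of `g`:
    (hΓsym : ∀ x i j k, Γ x i j k = Γ x i k j)
    (hmetric : ∀ x k i j, covDeriv02 Γ g x k i j = 0)
    (q : Fin n → ℝ)
    -- the holonomy group at `q` acts transitively on the `g`-unit sphere of `T_qM`: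
    (htrans : ∀ u v : Fin n → ℝ, quadForm g q u = 1 → quadForm g q v = 1 →
      ∃ γ X : ℝ → Fin n → ℝ, ContDiff ℝ 1 γ ∧ ContDiff ℝ 1 X ∧
        γ 0 = q ∧ γ 1 = q ∧ IsParallelAlong Γ γ X ∧ X 0 = u ∧ X 1 = v)
    (F : (Fin n → ℝ) → (Fin n → ℝ) → ℝ)
    (hFcont : Continuous (Function.uncurry F))
    (hF0 : ∀ x ξ, 0 ≤ F x ξ)
    (hhomog : ∀ x, ∀ c : ℝ, 0 ≤ c → ∀ ξ, F x (c • ξ) = c * F x ξ)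
    (hsub : ∀ x ξ η, F x (ξ + η) ≤ F x ξ + F x η)
    (hdef : ∀ x ξ, F x ξ = 0 → ξ = 0)
    -- `F` is invariant under `g`-parallel transport:
    (hinv : ∀ γ X : ℝ → Fin n → ℝ, ContDiff ℝ 1 γ → ContDiff ℝ 1 X →
      IsParallelAlong Γ γ X → ∀ t s : ℝ, F (γ t) (X t) = F (γ s) (X s)) :
    ∃ c : ℝ, 0 < c ∧ ∀ x ξ, F x ξ = c * Real.sqrt (quadForm g x ξ) := by
  
  classical
  have hsq : ∀ (x ξ : Fin n → ℝ) (c : ℝ), quadForm g x (c • ξ) = c ^ 2 * quadForm g x ξ := by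
    intro x ξ c
    simp only [quadForm, Pi.smul_apply, smul_eq_mul, Finset.mul_sum]
    exact Finset.sum_congr rfl fun i _ => Finset.sum_congr rfl fun j _ => by ring
  set i0 : Fin n := ⟨0, hn⟩
  set e0 : Fin n → ℝ := Pi.single i0 1 with he0_def
  have he0 : e0 ≠ 0 := by
    intro h
    have h1 := congrFun h i0
    simp [he0_def] at h1
  have hs0 : 0 < quadForm g q e0 := hgpos q e0 he0
  set r0 : ℝ := Real.sqrt (quadForm g q e0) with hr0_def
  have hr0 : 0 < r0 := Real.sqrt_pos.2 hs0
  set u0 : Fin n → ℝ := r0⁻¹ • e0 with hu0_def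
  have hu0 : quadForm g q u0 = 1 := by
    rw [hu0_def, hsq, inv_pow, hr0_def, Real.sq_sqrt hs0.le, inv_mul_cancel₀ hs0.ne']
  set c : ℝ := F q u0 with hc_def
  have hu0ne : u0 ≠ 0 := smul_ne_zero (inv_ne_zero hr0.ne') he0
  have hc : 0 < c :=
    lt_of_le_of_ne (hF0 q u0) fun h => hu0ne (hdef q u0 h.symm)
  have hatq : ∀ w, quadForm g q w = 1 → F q w = c := by
    intro w hw
    obtain ⟨γ, X, hγ, hX, hγ0, hγ1, hpar, hX0, hX1⟩ := htrans u0 w hu0 hw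
    have h := hinv γ X hγ hX hpar 1 0
    rw [hγ0, hγ1, hX0, hX1] at h
    exact h
  have main : ∀ x ξ, ξ ≠ 0 → quadForm g x ξ = 1 → F x ξ = c := by
    intro x ξ hξ hξ1
    set φ' : ℝ → ℝ := deriv Real.smoothTransition with hφ'_def
    set γ : ℝ → Fin n → ℝ := fun t => x + Real.smoothTransition t • (q - x) with hγ_def
    have hφcd : ContDiff ℝ 1 Real.smoothTransition := Real.smoothTransition.contDiff
    have hγcd : ContDiff ℝ 1 γ :=
      contDiff_const.add (hφcd.smul contDiff_const)
    have hφ'c : Continuous φ' :=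
      (Real.smoothTransition.contDiff (n := 2)).continuous_deriv (by norm_num)
    have hγder : ∀ t k, HasDerivAt (fun s => γ s k) (φ' t * (q k - x k)) t := by
      intro t k
      have h1 : HasDerivAt Real.smoothTransition (φ' t) t :=
        ((hφcd.differentiable one_ne_zero) t).hasDerivAt
      exact (h1.mul_const (q k - x k)).const_add (x k)
    have hφ'0 : ∀ t, t < 0 ∨ 1 < t → φ' t = 0 := by
      intro t ht
      rcases ht with h | h
      · have hev : Real.smoothTransition =ᶠ[nhds t] fun _ => 0 :=
          Filter.eventuallyEq_of_mem (Iio_mem_nhds h) fun s hs =>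
            Real.smoothTransition.zero_of_nonpos (le_of_lt hs)
        rw [hφ'_def, hev.deriv_eq, deriv_const]
      · have hev : Real.smoothTransition =ᶠ[nhds t] fun _ => 1 :=
          Filter.eventuallyEq_of_mem (Ioi_mem_nhds h) fun s hs =>
            Real.smoothTransition.one_of_one_le (le_of_lt hs)
        rw [hφ'_def, hev.deriv_eq, deriv_const]
    set M : ℝ → Fin n → Fin n → ℝ :=
      fun t i j => -∑ k, Γ (γ t) i j k * (φ' t * (q k - x k)) with hM_def
    have hMc : Continuous M := by
      refine continuous_pi fun i => continuous_pi fun j => Continuous.neg ?_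
      refine continuous_finset_sum _ fun k _ => ?_
      have hΓc : Continuous fun t => Γ (γ t) i j k :=
        (continuous_apply k).comp ((continuous_apply j).comp
          ((continuous_apply i).comp (hΓsmooth.continuous.comp hγcd.continuous)))
      exact hΓc.mul (hφ'c.mul continuous_const)
    have hMsupp : ∀ t, t < 0 ∨ 1 < t → M t = 0 := by
      intro t ht; funext i j; simp [hM_def, hφ'0 t ht]
    obtain ⟨X, hXcd, hX0, hXder⟩ := linear_ode_exists M hMc hMsupp ξ
    have hpar : IsParallelAlong Γ γ X := by
      intro t i
      have h1 : deriv (fun s => X s i) t = ∑ j, M t i j * X t j :=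
        (hasDerivAt_pi.1 (hXder t) i).deriv
      have h3 : ∀ j, M t i j * X t j
          = -∑ k, Γ (γ t) i j k * X t j * deriv (fun s => γ s k) t := by
        intro j
        show (-∑ k, Γ (γ t) i j k * (φ' t * (q k - x k))) * X t j = _
        rw [neg_mul, Finset.sum_mul]
        refine congrArg Neg.neg (Finset.sum_congr rfl fun k _ => ?_)
        rw [(hγder t k).deriv]
        ring
      rw [h1, Finset.sum_congr rfl fun j _ => h3 j, Finset.sum_neg_distrib]
      exact neg_add_cancel _
    have hγ0 : γ 0 = x := by
      rw [hγ_def]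
      simp [Real.smoothTransition.zero_of_nonpos le_rfl]
    have hγ1 : γ 1 = q := by
      rw [hγ_def]
      simp [Real.smoothTransition.one_of_one_le le_rfl]
    have hQpres := quadForm_parallel_const g hgsym hgsmooth Γ hΓsym hmetric
      γ X hγcd hXcd hpar 1 0
    rw [hγ0, hγ1, hX0] at hQpres
    have hX1unit : quadForm g q (X 1) = 1 := by rw [hQpres]; exact hξ1
    have hinv01 := hinv γ X hγcd hXcd hpar 0 1
    rw [hγ0, hγ1, hX0] at hinv01
    rw [hinv01]
    exact hatq (X 1) hX1unit
  refine ⟨c, hc, fun x ξ => ?_⟩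
  rcases eq_or_ne ξ 0 with rfl | hξ
  · have h0 : quadForm g x 0 = 0 := by simp [quadForm]
    have hF00 : F x 0 = 0 := by
      have h := hhomog x 0 le_rfl 0
      simpa using h
    simp [hF00, h0]
  · set r : ℝ := Real.sqrt (quadForm g x ξ) with hr_def
    have hQpos := hgpos x ξ hξ
    have hr : 0 < r := Real.sqrt_pos.2 hQpos
    set η : Fin n → ℝ := r⁻¹ • ξ with hη_def
    have hη1 : quadForm g x η = 1 := by
      rw [hη_def, hsq, inv_pow, hr_def, Real.sq_sqrt hQpos.le, inv_mul_cancel₀ hQpos.ne']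
    have hηne : η ≠ 0 := smul_ne_zero (inv_ne_zero hr.ne') hξ
    have hFη : F x η = c := main x η hηne hη1
    have hξr : ξ = r • η := by
      rw [hη_def, smul_smul, mul_inv_cancel₀ hr.ne', one_smul]
    rw [hξr, hhomog x r hr.le η, hFη, mul_comm]
end
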